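/- arXiv:2006.16185 — 4 statements merged into one kernel-verified Lean document; each statement's English description precedes it below -/
import Mathlib

section
/- For the discrete-time networked SIR dynamics s_i(k+1) = s_i(k) - h s_i(k) Σ_j β_{ij} x_j(k), x_i(k+1) = x_i(k) + h s_i(k) Σ_j β_{ij} x_j(k) - h γ_i x_i(k), r_i(k+1) = r_i(k) + h γ_i x_i(k), if 0 < h γ_i ≤ 1 and 0 < h Σ_j β_{ij} < 1 for all i, and initially s_i(0), x_i(0), r_i(0) ∈ [0,1] with s_i(0)+x_i(0)+r_i(0)=1, then for all k ≥ 0 and all i: s_i(k), x_i(k), r_i(k) ∈ [0,1] and s_i(k)+x_i(k)+r_i(k)=1. -/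
theorem sir_states_in_unit_interval
    (n : ℕ) (hn : 1 ≤ n)
    (s x r : ℕ → Fin n → ℝ) (β : Fin n → Fin n → ℝ) (γ : Fin n → ℝ) (h : ℝ)
    (hpos : 0 < h)
    (hβ : ∀ i j, 0 ≤ β i j)
    (hγpos : ∀ i, 0 < h * γ i) (hγle : ∀ i, h * γ i ≤ 1)
    (hβpos : ∀ i, 0 < h * ∑ j, β i j) (hβlt : ∀ i, h * ∑ j, β i j < 1)
    (hs : ∀ k i, s (k+1) i = s k i - h * s k i * ∑ j, β i j * x k j)
    (hx : ∀ k i, x (k+1) i = x k i + h * s k i * ∑ j, β i j * x k j - h * γ i * x k i)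
    (hr : ∀ k i, r (k+1) i = r k i + h * γ i * x k i)
    (hs0 : ∀ i, s 0 i ∈ Set.Icc (0:ℝ) 1)
    (hx0 : ∀ i, x 0 i ∈ Set.Icc (0:ℝ) 1)
    (hr0 : ∀ i, r 0 i ∈ Set.Icc (0:ℝ) 1)
    (hsum0 : ∀ i, s 0 i + x 0 i + r 0 i = 1) :
    ∀ k i, s k i ∈ Set.Icc (0:ℝ) 1 ∧ x k i ∈ Set.Icc (0:ℝ) 1 ∧
      r k i ∈ Set.Icc (0:ℝ) 1 ∧ s k i + x k i + r k i = 1 := by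
  have key : ∀ k, ∀ i, 0 ≤ s k i ∧ 0 ≤ x k i ∧ 0 ≤ r k i ∧
      s k i + x k i + r k i = 1 := by
    intro k
    induction k with
    | zero =>
      intro i
      exact ⟨(hs0 i).1, (hx0 i).1, (hr0 i).1, hsum0 i⟩
    | succ k ih =>
      intro i
      obtain ⟨hsk, hxk, hrk, hsumk⟩ := ih i
      have hxle1 : ∀ j, x k j ≤ 1 := by
        intro j
        obtain ⟨hsj, hxj, hrj, hsumj⟩ := ih j
        linarith
      -- bounds on F = ∑ j, β i j * x k j
      have hF0 : 0 ≤ ∑ j, β i j * x k j :=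
        Finset.sum_nonneg fun j _ => mul_nonneg (hβ i j) (ih j).2.1
      have hFle : ∑ j, β i j * x k j ≤ ∑ j, β i j :=
        Finset.sum_le_sum fun j _ => by
          have := mul_le_of_le_one_right (hβ i j) (hxle1 j)
          simpa using this
      have hhF : h * ∑ j, β i j * x k j ≤ h * ∑ j, β i j :=
        mul_le_mul_of_nonneg_left hFle hpos.le
      have hhFlt1 : h * ∑ j, β i j * x k j < 1 := lt_of_le_of_lt hhF (hβlt i)
      have hhF0 : 0 ≤ h * ∑ j, β i j * x k j := mul_nonneg hpos.le hF0
      have hs' : 0 ≤ s (k+1) i := by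
        rw [hs k i]
        have : s k i * (1 - h * ∑ j, β i j * x k j) ≥ 0 :=
          mul_nonneg hsk (by linarith)
        nlinarith
      have hx' : 0 ≤ x (k+1) i := by
        rw [hx k i]
        have h1 : 0 ≤ x k i * (1 - h * γ i) :=
          mul_nonneg hxk (by linarith [hγle i])
        have h2 : 0 ≤ h * s k i * ∑ j, β i j * x k j :=
          mul_nonneg (mul_nonneg hpos.le hsk) hF0
        nlinarith
      have hr' : 0 ≤ r (k+1) i := by
        rw [hr k i]
        have := mul_nonneg (hγpos i).le hxk
        nlinarith
      refine ⟨hs', hx', hr', ?_⟩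
      rw [hs k i, hx k i, hr k i]
      ring_nf
      linarith [hsumk]
  intro k i
  obtain ⟨hsk, hxk, hrk, hsumk⟩ := key k i
  exact ⟨⟨hsk, by linarith⟩, ⟨hxk, by linarith⟩, ⟨hrk, by linarith⟩, hsumk⟩
end

section
/- Under the discrete-time networked SIR dynamics with 0 < h γ_i ≤ 1, 0 < h Σ_j β_{ij} < 1, and valid initial conditions, the infected proportion vanishes asymptotically: lim_{k→∞} x_i(k) = 0 for every i. -/
theorem sir_infected_vanishes
    (n : ℕ) (hn : 1 ≤ n)
    (s x r : ℕ → Fin n → ℝ) (β : Fin n → Fin n → ℝ) (γ : Fin n → ℝ) (h : ℝ)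
    (hpos : 0 < h)
    (hβ : ∀ i j, 0 ≤ β i j)
    (hγpos : ∀ i, 0 < h * γ i) (hγle : ∀ i, h * γ i ≤ 1)
    (hβpos : ∀ i, 0 < h * ∑ j, β i j) (hβlt : ∀ i, h * ∑ j, β i j < 1)
    (hs : ∀ k i, s (k+1) i = s k i - h * s k i * ∑ j, β i j * x k j)
    (hx : ∀ k i, x (k+1) i = x k i + h * s k i * ∑ j, β i j * x k j - h * γ i * x k i)
    (hr : ∀ k i, r (k+1) i = r k i + h * γ i * x k i)
    (hs0 : ∀ i, s 0 i ∈ Set.Icc (0:ℝ) 1)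
    (hx0 : ∀ i, x 0 i ∈ Set.Icc (0:ℝ) 1)
    (hr0 : ∀ i, r 0 i ∈ Set.Icc (0:ℝ) 1)
    (hsum0 : ∀ i, s 0 i + x 0 i + r 0 i = 1)
    : ∀ i, Filter.Tendsto (fun k => x k i) Filter.atTop (nhds 0) := by
  -- invariant: nonnegativity and conservation
  have inv : ∀ k, ∀ i, 0 ≤ s k i ∧ 0 ≤ x k i ∧ 0 ≤ r k i ∧ s k i + x k i + r k i = 1 := by
    intro k
    induction k with
    | zero => exact fun i => ⟨(hs0 i).1, (hx0 i).1, (hr0 i).1, hsum0 i⟩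
    | succ k ih =>
      intro i
      obtain ⟨hsk, hxk, hrk, hsum⟩ := ih i
      have hxle : ∀ j, x k j ≤ 1 := by
        intro j
        obtain ⟨h1, h2, h3, h4⟩ := ih j
        linarith
      have hBx0 : 0 ≤ ∑ j, β i j * x k j :=
        Finset.sum_nonneg fun j _ => mul_nonneg (hβ i j) (ih j).2.1
      have hBxle : ∑ j, β i j * x k j ≤ ∑ j, β i j :=
        Finset.sum_le_sum fun j _ => by nlinarith [hβ i j, hxle j, (ih j).2.1]
      have h1 : h * ∑ j, β i j * x k j ≤ 1 := by
        have : h * ∑ j, β i j * x k j ≤ h * ∑ j, β i j :=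
          mul_le_mul_of_nonneg_left hBxle hpos.le
        linarith [hβlt i]
      refine ⟨?_, ?_, ?_, ?_⟩
      · rw [hs k i]; nlinarith
      · rw [hx k i]
        have hγ1 : h * γ i * x k i ≤ x k i := by nlinarith [hγle i]
        nlinarith [mul_nonneg (mul_nonneg hpos.le hsk) hBx0]
      · rw [hr k i]
        have : 0 ≤ h * γ i * x k i := mul_nonneg (hγpos i).le hxk
        linarith
      · rw [hs k i, hx k i, hr k i]; linarith
  have hγ' : ∀ i, 0 < γ i := by
    intro i
    have := hγpos i
    have : γ i = (h * γ i) / h := by field_simp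
    rw [this]; exact div_pos (hγpos i) hpos
  -- Lyapunov function
  set V : ℕ → ℝ := fun k => ∑ i, (s k i + x k i) with hV
  have hVstep : ∀ k, V k - V (k+1) = h * ∑ i, γ i * x k i := by
    intro k
    simp only [hV, hs, hx, Finset.mul_sum, ← Finset.sum_sub_distrib]
    exact Finset.sum_congr rfl fun i _ => by ring
  have hsumnn : ∀ k, 0 ≤ ∑ i, γ i * x k i := fun k =>
    Finset.sum_nonneg fun i _ => mul_nonneg (hγ' i).le (inv k i).2.1
  have hVanti : Antitone V := by
    apply antitone_nat_of_succ_le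
    intro k
    have := hVstep k
    nlinarith [hsumnn k, hpos]
  have hVnn : ∀ k, 0 ≤ V k := fun k =>
    Finset.sum_nonneg fun i _ => add_nonneg (inv k i).1 (inv k i).2.1
  have hbdd : BddBelow (Set.range V) := ⟨0, fun y ⟨k, hk⟩ => hk ▸ hVnn k⟩
  have hVconv : Filter.Tendsto V Filter.atTop (nhds (⨅ k, V k)) :=
    tendsto_atTop_ciInf hVanti hbdd
  have hVconv' : Filter.Tendsto (fun k => V (k+1)) Filter.atTop (nhds (⨅ k, V k)) :=
    hVconv.comp (Filter.tendsto_add_atTop_nat 1)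
  have hdiff : Filter.Tendsto (fun k => V k - V (k+1)) Filter.atTop (nhds 0) := by
    have := hVconv.sub hVconv'
    simpa using this
  intro i
  apply squeeze_zero (fun k => (inv k i).2.1)
    (g := fun k => (V k - V (k+1)) / (h * γ i))
  · intro k
    rw [le_div_iff₀ (hγpos i)]
    rw [hVstep k, Finset.mul_sum]
    have hsingle : h * (γ i * x k i) ≤ ∑ j, h * (γ j * x k j) := by
      apply Finset.single_le_sum (f := fun j => h * (γ j * x k j))
      · exact fun j _ => mul_nonneg hpos.le (mul_nonneg (hγ' j).le (inv k j).2.1)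
      · exact Finset.mem_univ i
    calc x k i * (h * γ i) = h * (γ i * x k i) := by ring
      _ ≤ ∑ j, h * (γ j * x k j) := hsingle
  · have := hdiff.div_const (h * γ i)
    simpa using this
end

section
/- Let A_k = I + h diag(s(k)) B - h diag(γ) where s(k) evolves according to the discrete-time networked SIR dynamics with the standard assumptions (0 < h γ_i ≤ 1, 0 < h Σ_j β_{ij} < 1, B irreducible, s_i(0) > 0). Then each A_k is an entrywise nonnegative matrix, and the spectral radius ρ(A_k) is monotonically nonincreasing in k: ρ(A_{k+1}) ≤ ρ(A_k). -/
open scoped ENNReal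

/-- Spectral radius of a real matrix: the spectral radius of its complexification. -/
noncomputable def matSpecRad {n : ℕ} (A : Matrix (Fin n) (Fin n) ℝ) : ℝ≥0∞ :=
  spectralRadius ℂ (A.map (Complex.ofReal ·))

/-- A nonnegative matrix is irreducible if some power connects every pair of indices. -/
def MatIrreducible {n : ℕ} (A : Matrix (Fin n) (Fin n) ℝ) : Prop :=
  ∀ i j, ∃ m : ℕ, 0 < (A ^ m) i j

attribute [local instance] Matrix.linftyOpNormedRing Matrix.linftyOpNormedAlgebra

lemma sir_aux_pow_entry_mono {n : ℕ} {A A' : Matrix (Fin n) (Fin n) ℝ}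
    (h0 : ∀ i j, 0 ≤ A i j) (hle : ∀ i j, A i j ≤ A' i j) (m : ℕ) :
    ∀ i j, 0 ≤ (A ^ m) i j ∧ (A ^ m) i j ≤ (A' ^ m) i j := by
  induction m with
  | zero =>
    intro i j
    by_cases hij : i = j <;> simp [pow_zero, Matrix.one_apply, hij]
  | succ m ih =>
    intro i j
    rw [pow_succ, pow_succ, Matrix.mul_apply, Matrix.mul_apply]
    constructor
    · exact Finset.sum_nonneg fun k _ => mul_nonneg (ih i k).1 (h0 k j)
    · refine Finset.sum_le_sum fun k _ => ?_
      exact mul_le_mul (ih i k).2 (hle k j) (h0 k j) (le_trans (ih i k).1 (ih i k).2)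

lemma sir_aux_nnnorm_map_le {n : ℕ} {A A' : Matrix (Fin n) (Fin n) ℝ}
    (h0 : ∀ i j, 0 ≤ A i j) (hle : ∀ i j, A i j ≤ A' i j) :
    ‖A.map (Complex.ofReal ·)‖₊ ≤ ‖A'.map (Complex.ofReal ·)‖₊ := by
  rw [Matrix.linfty_opNNNorm_def, Matrix.linfty_opNNNorm_def]
  refine Finset.sup_mono_fun fun i _ => Finset.sum_le_sum fun j _ => ?_
  simp only [Matrix.map_apply, Complex.nnnorm_real]
  have : |A i j| ≤ |A' i j| := by
    rw [abs_of_nonneg (h0 i j), abs_of_nonneg ((h0 i j).trans (hle i j))]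
    exact hle i j
  rwa [← NNReal.coe_le_coe, coe_nnnorm, coe_nnnorm, Real.norm_eq_abs, Real.norm_eq_abs]

/-- Monotonicity of the spectral radius in the entries, for nonnegative matrices. -/
lemma sir_aux_matSpecRad_mono {n : ℕ} {A A' : Matrix (Fin n) (Fin n) ℝ}
    (h0 : ∀ i j, 0 ≤ A i j) (hle : ∀ i j, A i j ≤ A' i j) :
    matSpecRad A ≤ matSpecRad A' := by
  haveI : CompleteSpace (Matrix (Fin n) (Fin n) ℂ) := FiniteDimensional.complete ℂ _
  have t1 := spectrum.pow_nnnorm_pow_one_div_tendsto_nhds_spectralRadius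
    (A.map (Complex.ofReal ·))
  have t2 := spectrum.pow_nnnorm_pow_one_div_tendsto_nhds_spectralRadius
    (A'.map (Complex.ofReal ·))
  refine le_of_tendsto_of_tendsto' t1 t2 fun m => ?_
  have e1 : (A.map (Complex.ofReal ·)) ^ m = (A ^ m).map (Complex.ofReal ·) :=
    (map_pow (Complex.ofRealHom.mapMatrix) A m).symm
  have e2 : (A'.map (Complex.ofReal ·)) ^ m = (A' ^ m).map (Complex.ofReal ·) :=
    (map_pow (Complex.ofRealHom.mapMatrix) A' m).symm
  rw [e1, e2]
  have := sir_aux_nnnorm_map_le (fun i j => (sir_aux_pow_entry_mono h0 hle m i j).1)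
    (fun i j => (sir_aux_pow_entry_mono h0 hle m i j).2)
  exact ENNReal.rpow_le_rpow (by exact_mod_cast this) (by positivity)

theorem sir_growth_matrix_nonneg_and_spectral_radius_nonincreasing
    (n : ℕ) (hn : 1 ≤ n)
    (s x r : ℕ → Fin n → ℝ) (B : Matrix (Fin n) (Fin n) ℝ) (γ : Fin n → ℝ) (h : ℝ)
    (hpos : 0 < h)
    (hB : ∀ i j, 0 ≤ B i j) (hBirr : MatIrreducible B)
    (hγpos : ∀ i, 0 < h * γ i) (hγle : ∀ i, h * γ i ≤ 1)
    (hBpos : ∀ i, 0 < h * ∑ j, B i j) (hBlt : ∀ i, h * ∑ j, B i j < 1)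
    (hs : ∀ k i, s (k+1) i = s k i - h * s k i * ∑ j, B i j * x k j)
    (hx : ∀ k i, x (k+1) i = x k i + h * s k i * ∑ j, B i j * x k j - h * γ i * x k i)
    (hr : ∀ k i, r (k+1) i = r k i + h * γ i * x k i)
    (hs0 : ∀ i, s 0 i ∈ Set.Icc (0:ℝ) 1) (hs0pos : ∀ i, 0 < s 0 i)
    (hx0 : ∀ i, x 0 i ∈ Set.Icc (0:ℝ) 1)
    (hr0 : ∀ i, r 0 i ∈ Set.Icc (0:ℝ) 1)
    (hsum0 : ∀ i, s 0 i + x 0 i + r 0 i = 1)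
    (Amat : ℕ → Matrix (Fin n) (Fin n) ℝ)
    (hAmat : ∀ k, Amat k =
      1 + h • (Matrix.diagonal (s k) * B) - h • Matrix.diagonal γ) :
    (∀ k i j, 0 ≤ Amat k i j) ∧
    (∀ k, matSpecRad (Amat (k+1)) ≤ matSpecRad (Amat k)) := by
  -- Invariance of the simplex
  have inv : ∀ k, (∀ i, 0 ≤ s k i) ∧ (∀ i, 0 ≤ x k i) ∧ (∀ i, 0 ≤ r k i) ∧
      (∀ i, s k i + x k i + r k i = 1) := by
    intro k
    induction k with
    | zero => exact ⟨fun i => (hs0 i).1, fun i => (hx0 i).1, fun i => (hr0 i).1, hsum0⟩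
    | succ k ih =>
      obtain ⟨hsk, hxk, hrk, hsumk⟩ := ih
      have hxle1 : ∀ i, x k i ≤ 1 := fun i => by nlinarith [hsk i, hrk i, hsumk i]
      have hSx0 : ∀ i, 0 ≤ ∑ j, B i j * x k j := fun i =>
        Finset.sum_nonneg fun j _ => mul_nonneg (hB i j) (hxk j)
      have hSle : ∀ i, ∑ j, B i j * x k j ≤ ∑ j, B i j := fun i =>
        Finset.sum_le_sum fun j _ => by nlinarith [hB i j, hxle1 j, hxk j]
      have hSlt1 : ∀ i, h * ∑ j, B i j * x k j < 1 := fun i =>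
        lt_of_le_of_lt (by nlinarith [hSle i, hpos.le]) (hBlt i)
      refine ⟨fun i => ?_, fun i => ?_, fun i => ?_, fun i => ?_⟩
      · rw [hs k i]
        have : s k i - h * s k i * ∑ j, B i j * x k j
            = s k i * (1 - h * ∑ j, B i j * x k j) := by ring
        rw [this]
        exact mul_nonneg (hsk i) (by linarith [hSlt1 i])
      · rw [hx k i]
        have h1 : 0 ≤ x k i * (1 - h * γ i) := mul_nonneg (hxk i) (by linarith [hγle i])
        have h2 : 0 ≤ h * s k i * ∑ j, B i j * x k j :=
          mul_nonneg (mul_nonneg hpos.le (hsk i)) (hSx0 i)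
        nlinarith
      · rw [hr k i]
        nlinarith [hγpos i, hxk i, hrk i, mul_nonneg (hγpos i).le (hxk i)]
      · rw [hs k i, hx k i, hr k i]
        have := hsumk i
        ring_nf
        ring_nf at this
        linarith
  -- s is componentwise nonincreasing
  have smono : ∀ k i, s (k+1) i ≤ s k i := by
    intro k i
    obtain ⟨hsk, hxk, _, _⟩ := inv k
    have hSx0 : 0 ≤ ∑ j, B i j * x k j :=
      Finset.sum_nonneg fun j _ => mul_nonneg (hB i j) (hxk j)
    rw [hs k i]
    nlinarith [mul_nonneg (mul_nonneg hpos.le (hsk i)) hSx0]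
  -- entrywise formula for Amat
  have entry : ∀ k i j, Amat k i j =
      (if i = j then 1 else 0) + h * (s k i * B i j) - h * (if i = j then γ i else 0) := by
    intro k i j
    rw [hAmat k]
    simp [Matrix.sub_apply, Matrix.add_apply, Matrix.smul_apply, Matrix.one_apply,
      Matrix.diagonal_mul, Matrix.diagonal_apply, smul_eq_mul]
  -- nonnegativity of entries
  have hnonneg : ∀ k i j, 0 ≤ Amat k i j := by
    intro k i j
    obtain ⟨hsk, _, _, _⟩ := inv k
    rw [entry k i j]
    split_ifs with hij
    · have h1 : 0 ≤ h * (s k i * B i j) :=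
        mul_nonneg hpos.le (mul_nonneg (hsk i) (hB i j))
      have := hγle i
      linarith
    · have h1 : 0 ≤ h * (s k i * B i j) :=
        mul_nonneg hpos.le (mul_nonneg (hsk i) (hB i j))
      linarith
  refine ⟨hnonneg, fun k => ?_⟩
  refine sir_aux_matSpecRad_mono (hnonneg (k+1)) fun i j => ?_
  rw [entry (k+1) i j, entry k i j]
  have : h * (s (k+1) i * B i j) ≤ h * (s k i * B i j) :=
    mul_le_mul_of_nonneg_left (mul_le_mul_of_nonneg_right (smono k i) (hB i j)) hpos.le
  linarith
end

section
/- Consider the discrete-time networked SIR dynamics under the standard assumptions and with x_i(0) > 0 for some i. Suppose s(k) converges to a limit s* ≠ 0, and let λ* be the Perron eigenvalue of A* = I + h diag(s*) B - h diag(γ) with A* irreducible, with positive left eigenvector w*. If λ* ≥ 1, then the sequence w*ᵀ x(k) is nondecreasing in k, contradicting x(k) → 0; hence λ* < 1. -/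
theorem sir_limit_perron_eigenvalue_below_one
    (n : ℕ) (hn : 1 ≤ n)
    (s x : ℕ → Fin n → ℝ) (B : Matrix (Fin n) (Fin n) ℝ) (γ : Fin n → ℝ) (h : ℝ)
    (hpos : 0 < h)
    (hB : ∀ i j, 0 ≤ B i j) (hBirr : MatIrreducible B)
    (hγpos : ∀ i, 0 < h * γ i) (hγle : ∀ i, h * γ i ≤ 1)
    (hBpos : ∀ i, 0 < h * ∑ j, B i j) (hBlt : ∀ i, h * ∑ j, B i j < 1)
    (hs0pos : ∀ i, 0 < s 0 i)
    (hxnn : ∀ k i, 0 ≤ x k i)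
    (hx0pos : ∃ i, 0 < x 0 i)
    (hxdyn : ∀ k, x (k+1) =
      (1 + h • (Matrix.diagonal (s k) * B) - h • Matrix.diagonal γ).mulVec (x k))
    (sstar : Fin n → ℝ) (hsstar_ne : sstar ≠ 0)
    (hslim : ∀ i, Filter.Tendsto (fun k => s k i) Filter.atTop (nhds (sstar i)))
    (hsge : ∀ k i, sstar i ≤ s k i)
    (hxlim : ∀ i, Filter.Tendsto (fun k => x k i) Filter.atTop (nhds 0))
    (Astar : Matrix (Fin n) (Fin n) ℝ)
    (hAstar : Astar = 1 + h • (Matrix.diagonal sstar * B) - h • Matrix.diagonal γ)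
    (hAirr : MatIrreducible Astar)
    (lam : ℝ) (w : Fin n → ℝ) (hwpos : ∀ i, 0 < w i)
    (heig : Astar.vecMul w = lam • w) :
    (1 ≤ lam → ∀ k, dotProduct w (x k) ≤ dotProduct w (x (k+1))) ∧ lam < 1 := by
  set A : ℕ → Matrix (Fin n) (Fin n) ℝ :=
    fun k => 1 + h • (Matrix.diagonal (s k) * B) - h • Matrix.diagonal γ with hA
  -- entrywise comparison
  have hentry : ∀ k i j, Astar i j ≤ A k i j := by
    intro k i j
    have hd : A k i j - Astar i j = h * ((s k i - sstar i) * B i j) := by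
      simp [hA, hAstar, Matrix.sub_apply, Matrix.add_apply, Matrix.smul_apply,
        Matrix.diagonal_mul, Matrix.one_apply]
      ring
    nlinarith [hsge k i, hB i j, hpos.le, mul_nonneg (mul_nonneg hpos.le (sub_nonneg.2 (hsge k i))) (hB i j)]
  -- vecMul comparison
  have hvm : ∀ k j, lam * w j ≤ ((A k).vecMul w) j := by
    intro k j
    have h1 : (Astar.vecMul w) j = lam * w j := by rw [heig]; simp
    rw [← h1]
    simp only [Matrix.vecMul, dotProduct]
    exact Finset.sum_le_sum fun i _ =>
      mul_le_mul_of_nonneg_left (hentry k i j) (hwpos i).le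
  -- key step
  have hkey : ∀ k, lam * dotProduct w (x k) ≤ dotProduct w (x (k+1)) := by
    intro k
    rw [hxdyn k, Matrix.dotProduct_mulVec]
    have : lam * dotProduct w (x k) = ∑ j, (lam * w j) * x k j := by
      simp [dotProduct, Finset.mul_sum]; ring_nf
    rw [this]
    exact Finset.sum_le_sum fun j _ =>
      mul_le_mul_of_nonneg_right (hvm k j) (hxnn k j)
  have hdnn : ∀ k, 0 ≤ dotProduct w (x k) := fun k =>
    Finset.sum_nonneg fun i _ => mul_nonneg (hwpos i).le (hxnn k i)
  have hmono : 1 ≤ lam → ∀ k, dotProduct w (x k) ≤ dotProduct w (x (k+1)) := by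
    intro hl k
    calc dotProduct w (x k) = 1 * dotProduct w (x k) := by ring
    _ ≤ lam * dotProduct w (x k) := mul_le_mul_of_nonneg_right hl (hdnn k)
    _ ≤ _ := hkey k
  refine ⟨hmono, ?_⟩
  by_contra hlam
  push_neg at hlam
  have hmono' := hmono hlam
  have hge : ∀ k, dotProduct w (x 0) ≤ dotProduct w (x k) := by
    intro k
    induction k with
    | zero => exact le_refl _
    | succ m ih => exact le_trans ih (hmono' m)
  have h0pos : 0 < dotProduct w (x 0) := by
    obtain ⟨i, hi⟩ := hx0pos
    refine Finset.sum_pos' (fun j _ => mul_nonneg (hwpos j).le (hxnn 0 j)) ⟨i, Finset.mem_univ i, mul_pos (hwpos i) hi⟩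
  have hlim0 : Filter.Tendsto (fun k => dotProduct w (x k)) Filter.atTop (nhds 0) := by
    have : Filter.Tendsto (fun k => ∑ i, w i * x k i) Filter.atTop (nhds (∑ i : Fin n, w i * 0)) :=
      tendsto_finset_sum _ fun i _ => (hxlim i).const_mul (w i)
    simpa [dotProduct] using this
  have := hlim0.eventually (eventually_lt_nhds h0pos)
  obtain ⟨k, hk⟩ := this.exists
  exact absurd (hge k) (not_le.2 hk)
end
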